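/- arXiv:2512.14381 — 2 statements merged into one kernel-verified Lean document; each statement's English description precedes it below -/
import Mathlib

section
/- Let m, n ≥ 1, and let D_k ≤ S_k denote the dihedral subgroup generated by the k-cycle (1 2 … k) and the involution i ↦ k+1−i. Under the standard embedding Γ of D_m ≀ D_n into S_{mn}, the element t = ((s_m, s_m, …, s_m); s_n), where s_k is the reversal involution of [k], satisfies t·σ·t⁻¹ = σ⁻¹ for σ = ((c, e, …, e); r_n) with c the m-cycle (1 2 … m) and r_n the n-cycle (1 2 … n). Consequently Γ(D_m ≀ D_n) contains a subgroup conjugate in S_{mn} to the dihedral group D_{mn} of order 2mn. -/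
private lemma rotVal {k : ℕ} (a : Fin k) :
    (finRotate k a).val = if a.val = k - 1 then 0 else a.val + 1 := by
  rcases k with _ | k
  · exact a.elim0
  · rw [coe_finRotate]
    simp [Fin.ext_iff]

/-- Let `m, n ≥ 1`.  Identify `S_{mn}` with the permutation group of
`Fin m × Fin n` (the point `(j-1)m+i` corresponding to the pair `(i, j)`, 0-indexed).
Under the standard embedding `Γ` of `D_m ≀ D_n` into `S_{mn}`:
* the image of `σ = ((c, e, …, e); r_n)` (with `c = (1 2 … m)`, `r_n = (1 2 … n)`) is the
  permutation `g : (i,j) ↦ (if r_n j = 0 then c i else i, r_n j)`;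
* the image of `t = ((s_m, …, s_m); s_n)` (with `s_k` the reversal of `[k]`) is the
  permutation `t : (i,j) ↦ (rev i, rev j)`.
Then `t · g · t⁻¹ = g⁻¹`, and consequently `Γ(D_m ≀ D_n)` contains a subgroup — namely
`⟨g, t⟩` — that is conjugate in `S_{mn}` to the dihedral group
`D_{mn} = ⟨finRotate (mn), Fin.revPerm⟩` of order `2mn`. -/
theorem wreath_dihedral_contains_conjugate_dihedral (m n : ℕ) (hm : 1 ≤ m) (hn : 1 ≤ n)
    (g t : Equiv.Perm (Fin m × Fin n))
    (hg : ∀ p : Fin m × Fin n,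
      g p = (if (finRotate n p.2).val = 0 then finRotate m p.1 else p.1, finRotate n p.2))
    (ht : ∀ p : Fin m × Fin n, t p = (p.1.rev, p.2.rev)) :
    t * g * t⁻¹ = g⁻¹ ∧
      ∃ c : Equiv.Perm (Fin (m * n)),
        Subgroup.map (MulAut.conj c).toMonoidHom
            (Subgroup.closure {finRotate (m * n), Fin.revPerm}) =
          Subgroup.closure {finProdFinEquiv.permCongr g, finProdFinEquiv.permCongr t} := by
  have ht2 : t * t = 1 := by
    ext p <;> simp [Equiv.Perm.mul_apply, ht]
  have htinv : t⁻¹ = t := inv_eq_of_mul_eq_one_right ht2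
  constructor
  · rw [htinv, eq_inv_iff_mul_eq_one]
    have h1 := fun (p : Fin m × Fin n) => p.1.isLt
    have h2 := fun (p : Fin m × Fin n) => p.2.isLt
    ext p <;>
      simp only [Equiv.Perm.mul_apply, Equiv.Perm.one_apply, hg, ht] <;>
      simp only [apply_ite Fin.rev, apply_ite Fin.val, rotVal, Fin.val_rev] <;>
      (have := h1 p; have := h2 p; split_ifs <;> omega)
  · refine ⟨1, ?_⟩
    have hG : (finProdFinEquiv.permCongr g) = finRotate (m * n) := by
      apply Equiv.ext; intro a
      obtain ⟨⟨i, j⟩, rfl⟩ := finProdFinEquiv.surjective a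
      rw [Equiv.permCongr_apply, Equiv.symm_apply_apply, hg]
      apply Fin.ext
      simp only [finProdFinEquiv_apply_val, rotVal, apply_ite Fin.val, mul_ite, mul_zero,
        mul_add, mul_one]
      have hi := i.isLt; have hj := j.isLt
      have e9 : m * n - 1 + 1 = m * n := Nat.succ_pred_eq_of_pos (Nat.mul_pos hm hn)
      rcases Nat.lt_or_ge (i : ℕ) (m - 1) with hc | hc
      · have e8 : n * (i : ℕ) + n + n ≤ m * n := by
          calc n * (i : ℕ) + n + n = n * ((i : ℕ) + 2) := by ring
          _ ≤ n * m := Nat.mul_le_mul_left _ (by omega)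
          _ = m * n := mul_comm n m
        split_ifs <;> first | contradiction | omega
      · have hieq : (i : ℕ) = m - 1 := by omega
        have e7 : m * n = n * (i : ℕ) + n := by
          rcases m with _ | m0
          · omega
          · have : (i : ℕ) = m0 := by omega
            rw [this]; ring
        split_ifs <;> first | contradiction | omega
    have hT : (finProdFinEquiv.permCongr t) = Fin.revPerm := by
      apply Equiv.ext; intro a
      obtain ⟨⟨i, j⟩, rfl⟩ := finProdFinEquiv.surjective a
      rw [Equiv.permCongr_apply, Equiv.symm_apply_apply, ht]
      apply Fin.ext
      simp only [finProdFinEquiv_apply_val, Fin.revPerm_apply, Fin.val_rev]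
      have hi := i.isLt; have hj := j.isLt
      have e1 : n * (m - ((i : ℕ) + 1)) + n * ((i : ℕ) + 1) = n * m := by
        rw [← mul_add, Nat.sub_add_cancel hi]
      have e2 : n * ((i : ℕ) + 1) = n * (i : ℕ) + n := by ring
      have e3 : n * m = m * n := mul_comm n m
      omega
    rw [hG, hT]
    have hc : (MulAut.conj (1 : Equiv.Perm (Fin (m * n)))).toMonoidHom =
        MonoidHom.id _ := by ext x; simp
    rw [hc, Subgroup.map_id]
end

section
/- Let n be an odd prime and let I be a Young subgroup of S_n of type μ, where μ is a partition of n with at least 3 parts. Then there exists σ ∈ S_n such that σIσ⁻¹ ∩ D_n = {e}, where D_n is the dihedral subgroup of S_n generated by the n-cycle (1 2 … n) and the reversal involution i ↦ n+1−i. -/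
private lemma rev_eq_last_sub (n : ℕ) (x : Fin (n+1)) : Fin.revPerm x = Fin.last n - x := by
  ext
  rw [Fin.revPerm_apply, Fin.val_rev, Fin.sub_def]
  show n + 1 - (x.val + 1) = (n + 1 - x.val + (Fin.last n).val) % (n + 1)
  have hx : x.val ≤ n := Fin.is_le x
  have h : (n + 1 - x.val) + (Fin.last n).val = (n+1) + (n - x.val) := by
    simp [Fin.last]; omega
  rw [h, Nat.add_mod_left, Nat.mod_eq_of_lt (by omega)]
  omega

open Fin.CommRing in
private lemma dihedral_form {n : ℕ} (g : Equiv.Perm (Fin (n+1)))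
    (hg : g ∈ Subgroup.closure {finRotate (n+1), Fin.revPerm}) :
    ∃ m : Fin (n+1), (∀ x, g x = x + m) ∨ (∀ x, g x = m - x) := by
  induction hg using Subgroup.closure_induction with
  | mem g hg =>
    rcases hg with rfl | rfl
    · exact ⟨1, Or.inl fun x => finRotate_succ_apply x⟩
    · exact ⟨Fin.last n, Or.inr fun x => rev_eq_last_sub n x⟩
  | one => exact ⟨0, Or.inl fun x => by simp⟩
  | mul g h _ _ ihg ihh =>
    obtain ⟨a, ha | ha⟩ := ihg <;> obtain ⟨c, hc | hc⟩ := ihh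
    · exact ⟨c + a, Or.inl fun x => by
        simp only [Equiv.Perm.mul_apply, hc, ha]; ring⟩
    · exact ⟨c + a, Or.inr fun x => by
        simp only [Equiv.Perm.mul_apply, hc, ha]; ring⟩
    · exact ⟨a - c, Or.inr fun x => by
        simp only [Equiv.Perm.mul_apply, hc, ha]; ring⟩
    · exact ⟨a - c, Or.inl fun x => by
        simp only [Equiv.Perm.mul_apply, hc, ha]; ring⟩
  | inv g _ ihg =>
    obtain ⟨a, ha | ha⟩ := ihg
    · refine ⟨-a, Or.inl fun x => ?_⟩
      have : g (x + -a) = x := by rw [ha]; ring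
      calc g⁻¹ x = g⁻¹ (g (x + -a)) := by rw [this]
        _ = x + -a := g.symm_apply_apply _
    · refine ⟨a, Or.inr fun x => ?_⟩
      have : g (a - x) = x := by rw [ha]; ring
      calc g⁻¹ x = g⁻¹ (g (a - x)) := by rw [this]
        _ = a - x := g.symm_apply_apply _


private lemma mod_help {N x r : ℕ} (h : x = N + r ∨ x = r) (hr : r < N) : x % N = r := by
  rcases h with rfl | rfl
  · rw [Nat.add_mod_left, Nat.mod_eq_of_lt hr]
  · exact Nat.mod_eq_of_lt hr

private lemma no_translation {n k : ℕ} (hk : 2 ≤ k) (c : Fin (n+1) → Fin k)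
    (hmono : Monotone c) (hsurj : Function.Surjective c) (m : Fin (n+1))
    (h : ∀ x, c (x + m) = c x) : m = 0 := by
  by_contra hm
  have hm1 : 1 ≤ m.val := Nat.one_le_iff_ne_zero.mpr (fun h0 => hm (Fin.ext h0))
  have hmn : m.val ≤ n := Fin.is_le m
  -- value computations
  have hneg : (-m).val = n + 1 - m.val := by
    rw [Fin.neg_def]
    exact mod_help (Or.inr rfl) (by omega)
  have hlast : (Fin.last n - m).val = n - m.val := by
    rw [Fin.sub_def]
    exact mod_help (Or.inl (by simp [Fin.last]; omega)) (by omega)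
  have h1 : c 0 = c (-m) := by
    have := h (-m); rwa [neg_add_cancel] at this
  have h2 : c (Fin.last n) = c (Fin.last n - m) := by
    have := h (Fin.last n - m); rwa [sub_add_cancel] at this
  have hle : Fin.last n - m ≤ -m := by
    rw [Fin.le_def, hneg, hlast]; omega
  have hl0 : c (Fin.last n) = c 0 := by
    refine le_antisymm ?_ (hmono (Fin.zero_le _))
    rw [h2, h1]; exact hmono hle
  have hall : ∀ x, c x = c 0 := fun x =>
    le_antisymm (hl0 ▸ hmono (Fin.le_last x)) (hmono (Fin.zero_le x))
  obtain ⟨x0, hx0⟩ := hsurj ⟨0, by omega⟩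
  obtain ⟨x1, hx1⟩ := hsurj ⟨1, by omega⟩
  rw [hall x0] at hx0
  rw [hall x1] at hx1
  have : (⟨0, by omega⟩ : Fin k) = ⟨1, by omega⟩ := hx0 ▸ hx1
  simp [Fin.ext_iff] at this

private lemma no_reflection {n k : ℕ} (hk : 3 ≤ k) (c : Fin (n+1) → Fin k)
    (hmono : Monotone c) (hsurj : Function.Surjective c) (m : Fin (n+1))
    (h : ∀ x, c (m - x) = c x) : False := by
  set j0 : Fin k := ⟨0, by omega⟩ with hj0
  set j1 : Fin k := ⟨1, by omega⟩ with hj1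
  set j2 : Fin k := ⟨2, by omega⟩ with hj2
  obtain ⟨y1, hy1⟩ := hsurj j1
  obtain ⟨y2, hy2⟩ := hsurj j2
  set F1 : Finset (Fin (n+1)) := Finset.univ.filter (fun x => c x = j1) with hF1def
  have hF1 : F1.Nonempty := ⟨y1, by simp [hF1def, hy1]⟩
  set t1 := F1.min' hF1 with ht1def
  have ht1 : c t1 = j1 := by have := F1.min'_mem hF1; simpa [hF1def] using this
  have ht1min : ∀ x, c x = j1 → t1 ≤ x := fun x hx =>
    Finset.min'_le _ _ (by simp [hF1def, hx])
  set F2 : Finset (Fin (n+1)) := Finset.univ.filter (fun x => c x = j2) with hF2def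
  have hF2 : F2.Nonempty := ⟨y2, by simp [hF2def, hy2]⟩
  set t2 := F2.min' hF2 with ht2def
  have ht2 : c t2 = j2 := by have := F2.min'_mem hF2; simpa [hF2def] using this
  -- c 0 = j0
  obtain ⟨y0, hy0⟩ := hsurj j0
  have hc0 : c 0 = j0 := by
    refine le_antisymm ?_ ?_
    · rw [← hy0]; exact hmono (Fin.zero_le y0)
    · rw [Fin.le_def]; exact Nat.zero_le _
  have below_t1 : ∀ x, x < t1 → c x = j0 := by
    intro x hx
    have h1 : c x ≤ j1 := ht1 ▸ hmono hx.le
    have h2 : c x ≠ j1 := fun hcx => absurd (ht1min x hcx) (not_le.mpr hx)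
    have h3 : (c x).val < 1 :=
      Fin.lt_def.mp (lt_of_le_of_ne h1 h2)
    exact Fin.ext (by simp only [hj0]; omega)
  have above_t1 : ∀ x : Fin (n+1), t1 ≤ x → j1 ≤ c x := fun x hx => ht1 ▸ hmono hx
  have above_t2 : ∀ x : Fin (n+1), t2 ≤ x → j2 ≤ c x := fun x hx => ht2 ▸ hmono hx
  -- c m = j0, so m < t1
  have hm0 : c m = j0 := by have := h 0; rw [sub_zero] at this; rw [this, hc0]
  have hmt1 : m < t1 := by
    by_contra hcon
    have := above_t1 m (not_lt.mp hcon)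
    rw [hm0, Fin.le_def] at this
    simp [hj0, hj1] at this
  have hmlt : m.val < t1.val := Fin.lt_def.mp hmt1
  have ht1n : t1.val ≤ n := Fin.is_le t1
  -- step A: m.val + 1 = t1.val
  have hA : m.val + 1 = t1.val := by
    by_contra hcon
    have hlt : m.val + 1 < t1.val := by omega
    set x : Fin (n+1) := ⟨m.val + 1, by omega⟩ with hxdef
    have hx0 : c x = j0 := below_t1 x (Fin.lt_def.mpr (by simp [hxdef]; omega))
    have hmx : m - x = Fin.last n := by
      apply Fin.ext
      rw [Fin.sub_def]
      show (n + 1 - (m.val + 1) + m.val) % (n+1) = (Fin.last n).val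
      simp only [Fin.val_last]
      exact mod_help (Or.inr (by omega)) (by omega)
    have hlastj0 : c (Fin.last n) = j0 := by
      have := h x; rwa [hmx, hx0] at this
    have := above_t1 (Fin.last n) (Fin.le_def.mpr (by simp [Fin.val_last]; omega))
    rw [hlastj0, Fin.le_def] at this
    simp [hj0, hj1] at this
  -- step B: contradiction
  have hmt1' : m - t1 = Fin.last n := by
    apply Fin.ext
    rw [Fin.sub_def]
    show (n + 1 - t1.val + m.val) % (n+1) = (Fin.last n).val
    simp only [Fin.val_last]
    exact mod_help (Or.inr (by omega)) (by omega)
  have hlastj1 : c (Fin.last n) = j1 := by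
    have := h t1; rwa [hmt1', ht1] at this
  have := above_t2 (Fin.last n) (Fin.le_def.mpr (by simp [Fin.val_last]; exact Fin.is_le t2))
  rw [hlastj1, Fin.le_def] at this
  simp [hj1, hj2] at this



/-- Let `n` be an odd prime and let `I` be a Young subgroup of `S_n` of
type `μ`, where `μ` is a partition of `n` with at least 3 parts.  Here the Young subgroup
is encoded as the stabilizer of the ordered set partition of `[n]` given by the fibers of a
surjective block-assignment map `b : Fin n → Fin k` with `k ≥ 3` (the parts `μ_i` being the
fiber sizes, all positive by surjectivity).  Then there exists `σ ∈ S_n` such that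
`σ I σ⁻¹ ∩ D_n = {e}`, where `D_n = ⟨(1 2 … n), i ↦ n+1-i⟩` is the dihedral subgroup of
`S_n` of order `2n`. -/
theorem young_subgroup_conjugate_trivial_intersection_dihedral
    (n : ℕ) (hp : n.Prime) (hodd : Odd n) (k : ℕ) (hk : 3 ≤ k)
    (b : Fin n → Fin k) (hb : Function.Surjective b) :
    ∃ σ : Equiv.Perm (Fin n), ∀ π : Equiv.Perm (Fin n),
      (∀ x : Fin n, b (π x) = b x) →
      σ * π * σ⁻¹ ∈ Subgroup.closure {finRotate n, Fin.revPerm} →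
      π = 1 := by
  obtain ⟨n', rfl⟩ : ∃ m, n = m + 1 := ⟨n - 1, by have := hp.one_lt; omega⟩
  set s : Equiv.Perm (Fin (n'+1)) := Tuple.sort b with hs
  have hmono : Monotone (b ∘ s) := Tuple.monotone_sort b
  have hsurj : Function.Surjective (b ∘ s) := hb.comp s.surjective
  refine ⟨s⁻¹, fun π hπ hclos => ?_⟩
  rw [inv_inv] at hclos
  have hcg : ∀ x, (b ∘ s) ((s⁻¹ * π * s) x) = (b ∘ s) x := by
    intro x
    show b (s ((s⁻¹ * π * s) x)) = b (s x)
    simp only [Equiv.Perm.mul_apply]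
    rw [show s (s⁻¹ (π (s x))) = π (s x) from s.apply_symm_apply _]
    exact hπ (s x)
  obtain ⟨m, hform | hform⟩ := dihedral_form (s⁻¹ * π * s) hclos
  · have hm : m = 0 :=
      no_translation (by omega) (b ∘ s) hmono hsurj m
        (fun x => by rw [← hform x]; exact hcg x)
    have h1 : s⁻¹ * π * s = 1 := Equiv.ext fun x => by
      rw [hform x, hm, add_zero]; rfl
    have h2 : π = s * (s⁻¹ * π * s) * s⁻¹ := by group
    rw [h1] at h2
    simpa using h2
  · exact (no_reflection hk (b ∘ s) hmono hsurj m
      (fun x => by rw [← hform x]; exact hcg x)).elim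
end
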